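/- arXiv:2510.04461 — 3 statements merged into one kernel-verified Lean document; each statement's English description precedes it below -/
import Mathlib

section
/- Let k ≥ 2 and let G be a graph on n vertices containing no path on k vertices as a subgraph. Then the number of edges of G satisfies e(G) ≤ (k-2)n/2. -/
/-!
Write `e(S)` for `#(G.interedges S S)`, twice the number of edges inside a vertex set `S`, and
prove `e(S) ≤ (k - 2)|S|` by strong induction on `S`. A vertex with at most `(k - 2)/2`
neighbours in `S` can be deleted, and a split of `S` with no edges across is handled part by
part. Otherwise `S` is connected and has minimum degree at least `(k - 1)/2`. If `|S| ≥ k`, take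
a longest path in `S`; it has fewer than `k` vertices, and its end vertices have all their
neighbours on it, with degrees summing to at least its number of vertices. By pigeonhole some
edge `x y` of the path has `x` adjacent to the last vertex and `y` adjacent to the first, so the
vertices of the path span a cycle (Dirac–Pósa), and connectivity extends the cycle to a longer
path. Hence `|S| < k`, and the trivial bound `e(S) ≤ |S|(|S| - 1)` suffices.
-/

open Finset

namespace List

variable {α : Type*}

theorem exists_append_getLast?_mem_head?_mem [DecidableEq α] {l : List α} {s t : Finset α}
    (hs : ∀ y ∈ s, y ∈ l ∧ y ∉ l.head?) (ht : ∀ x ∈ t, x ∈ l ∧ x ∉ l.getLast?)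
    (hcard : l.length - 1 < #s + #t) :
    ∃ l₁ l₂, l = l₁ ++ l₂ ∧ (∃ x ∈ l₁.getLast?, x ∈ t) ∧ ∃ y ∈ l₂.head?, y ∈ s := by
  have hs_pos : ∀ y ∈ s, 0 < l.idxOf y := fun y hy => Nat.pos_of_ne_zero fun h0 => by
    rcases (idxOf_eq_zero_iff_eq_nil_or_head_eq y).1 h0 with h | h
    · exact not_mem_nil (h ▸ (hs y hy).1)
    · exact (hs y hy).2 h
  have hs_lt : ∀ y ∈ s, l.idxOf y < l.length := fun y hy => idxOf_lt_length_iff.2 (hs y hy).1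
  have ht_lt : ∀ x ∈ t, l.idxOf x < l.length - 1 := fun x hx => by
    have hlt := idxOf_lt_length_iff.2 (ht x hx).1
    refine lt_of_le_of_ne (by omega) fun h => (ht x hx).2 ?_
    rw [getLast?_eq_getElem?, ← h, getElem?_idxOf (ht x hx).1]
    rfl
  -- Gap `i` of `l` lies between positions `i` and `i + 1`; `y ∈ s` marks the gap before it,
  -- `x ∈ t` the gap after it, and there are only `l.length - 1` gaps.
  set A := s.image fun y => l.idxOf y - 1
  set B := t.image l.idxOf
  have hA : #A = #s := card_image_of_injOn fun u hu v hv h => (idxOf_inj (hs u hu).1).1 <| by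
    have := hs_pos u hu; have := hs_pos v hv; omega
  have hB : #B = #t := card_image_of_injOn fun u hu _ _ h => (idxOf_inj (ht u hu).1).1 h
  have hAB : A ∪ B ⊆ Finset.range (l.length - 1) := union_subset
    (image_subset_iff.2 fun y hy => by
      have := hs_lt y hy; have := hs_pos y hy; rw [Finset.mem_range]; omega)
    (image_subset_iff.2 fun x hx => Finset.mem_range.2 (ht_lt x hx))
  obtain ⟨i, hi⟩ : (A ∩ B).Nonempty := by
    rw [← card_pos]
    have := card_union_add_card_inter A B
    have := card_le_card hAB
    rw [Finset.card_range] at this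
    omega
  obtain ⟨y, hy, rfl⟩ := mem_image.1 (mem_inter.1 hi).1
  obtain ⟨x, hx, hxy⟩ := mem_image.1 (mem_inter.1 hi).2
  refine ⟨l.take (l.idxOf y), l.drop (l.idxOf y), (take_append_drop _ _).symm,
    ⟨x, ?_, hx⟩, ⟨y, ?_, hy⟩⟩
  · rw [getLast?_take, if_neg (hs_pos y hy).ne', ← hxy, getElem?_idxOf (ht x hx).1]
    rfl
  · rw [head?_drop, getElem?_idxOf (hs y hy).1]
    rfl

variable {R : α → α → Prop}

theorem IsChain.exists_perm_head?_eq {c : List α} (hc : c.IsChain R)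
    (hcyc : ∀ x ∈ c.getLast?, ∀ y ∈ c.head?, R x y) {w : α} (hw : w ∈ c) :
    ∃ c' : List α, c'.Perm c ∧ c'.IsChain R ∧ c'.head? = some w := by
  obtain ⟨s, t, rfl⟩ := append_of_mem hw
  obtain ⟨hs, ht, -⟩ := isChain_append.1 hc
  refine ⟨(w :: t) ++ s, perm_append_comm, ht.append hs fun x hx y hy => hcyc x ?_ y ?_, rfl⟩
  · rwa [getLast?_append_of_ne_nil _ (cons_ne_nil w t)]
  · cases s with
    | nil => simp at hy
    | cons b s => exact hy

theorem IsChain.reverse_append_of_cross [Std.Symm R] {l₁ l₂ : List α}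
    (h : (l₁ ++ l₂).IsChain R) {a x y z : α} (ha : a ∈ l₁.head?) (hx : x ∈ l₁.getLast?)
    (hy : y ∈ l₂.head?) (hz : z ∈ l₂.getLast?) (hay : R a y) (hzx : R z x) :
    (l₂.reverse ++ l₁).IsChain R ∧
      ∀ u ∈ (l₂.reverse ++ l₁).getLast?, ∀ v ∈ (l₂.reverse ++ l₁).head?, R u v := by
  obtain ⟨h₁, h₂, -⟩ := isChain_append.1 h
  have hl₁ : l₁ ≠ [] := by rintro rfl; simp at hx
  have hl₂ : l₂.reverse ≠ [] := by rw [ne_eq, reverse_eq_nil_iff]; rintro rfl; simp at hy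
  refine ⟨(isChain_reverse.2 (h₂.imp fun _ _ h => symm_of R h)).append h₁ fun u hu v hv => ?_,
    fun u hu v hv => ?_⟩
  · rw [getLast?_reverse, hy, Option.mem_some_iff] at hu
    rw [ha, Option.mem_some_iff] at hv
    subst hu hv
    exact symm_of R hay
  · rw [getLast?_append_of_ne_nil _ hl₁, hx, Option.mem_some_iff] at hu
    rw [head?_append_of_ne_nil _ hl₂, head?_reverse, hz, Option.mem_some_iff] at hv
    subst hu hv
    exact symm_of R hzx

end List

namespace SimpleGraph

variable {V : Type*} (G : SimpleGraph V)

theorem length_lt_of_isChain_of_nodup {k : ℕ} (hk : 0 < k)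
    (hfree : ∀ (u v : V) (p : G.Walk u v), p.IsPath → p.length + 1 < k)
    {l : List V} (hc : l.IsChain G.Adj) (hnd : l.Nodup) : l.length < k := by
  rcases eq_or_ne l [] with rfl | hne
  · exact hk
  have := hfree _ _ (Walk.ofSupport l hne hc) (by rwa [Walk.isPath_def, Walk.support_ofSupport])
  rw [Walk.length_ofSupport] at this
  have := List.length_pos_of_ne_nil hne
  omega

def IsPathIn (S : Finset V) (l : List V) : Prop :=
  l.IsChain G.Adj ∧ l.Nodup ∧ ∀ v ∈ l, v ∈ S

section IsPathIn

variable {G} {S : Finset V} {l : List V}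

theorem IsPathIn.cons {u : V} (hl : G.IsPathIn S l) (hu : u ∈ S) (hul : u ∉ l)
    (hadj : ∀ w ∈ l.head?, G.Adj u w) : G.IsPathIn S (u :: l) :=
  ⟨hl.1.cons hadj, List.nodup_cons.2 ⟨hul, hl.2.1⟩, List.forall_mem_cons.2 ⟨hu, hl.2.2⟩⟩

theorem IsPathIn.reverse (hl : G.IsPathIn S l) : G.IsPathIn S l.reverse :=
  ⟨List.isChain_reverse.2 (hl.1.imp fun _ _ h => h.symm), List.nodup_reverse.2 hl.2.1,
    fun v hv => hl.2.2 v (List.mem_reverse.1 hv)⟩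

theorem IsPathIn.of_perm {c : List V} (hl : G.IsPathIn S l) (hc : c.IsChain G.Adj)
    (h : c.Perm l) : G.IsPathIn S c :=
  ⟨hc, h.nodup_iff.2 hl.2.1, fun v hv => hl.2.2 v (h.subset hv)⟩

theorem IsPathIn.mem_of_head?_adj {c : List V}
    (hmax : ∀ l', G.IsPathIn S l' → l'.length ≤ l.length) (hc : G.IsPathIn S c) (hcl : c.Perm l)
    {w u : V} (hw : w ∈ c.head?) (hu : u ∈ S) (hwu : G.Adj w u) : u ∈ l := by
  by_contra hul
  have := hmax (u :: c) (hc.cons hu (fun h => hul (hcl.subset h)) fun w' hw' => by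
    rw [Option.mem_unique hw hw'] at hwu; exact hwu.symm)
  simp [hcl.length_eq] at this

end IsPathIn

variable [DecidableRel G.Adj]

theorem card_interedges_eq_sum (s t : Finset V) :
    #(G.interedges s t) = ∑ v ∈ s, #{w ∈ t | G.Adj v w} := by
  simp only [interedges_def, card_filter, sum_product]

theorem card_interedges_univ [Fintype V] : #(G.interedges univ univ) = 2 * #G.edgeFinset := by
  rw [card_interedges_eq_sum, ← sum_degrees_eq_twice_card_edges]
  simp [degree, neighborFinset_eq_filter]

variable [DecidableEq V]

theorem card_interedges_union_self {s t : Finset V} (h : Disjoint s t) :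
    #(G.interedges (s ∪ t) (s ∪ t)) =
      #(G.interedges s s) + 2 * #(G.interedges s t) + #(G.interedges t t) := by
  have hcomm : #(G.interedges t s) = #(G.interedges s t) := by
    have := G.symm
    exact Rel.card_interedges_comm _ _
  simp only [card_interedges_eq_sum] at hcomm ⊢
  simp only [filter_union, card_union_of_disjoint (disjoint_filter_filter h), sum_union h,
    sum_add_distrib]
  omega

theorem card_interedges_self_erase {S : Finset V} {v : V} (hv : v ∈ S) :
    #(G.interedges S S) =
      #(G.interedges (S.erase v) (S.erase v)) + 2 * #{w ∈ S | G.Adj v w} := by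
  conv_lhs => rw [← insert_erase hv, insert_eq]
  rw [card_interedges_union_self G (disjoint_singleton_left.2 (notMem_erase v S))]
  have hloop : #(G.interedges {v} {v}) = 0 := by simp [card_interedges_eq_sum]
  have hdeg : #(G.interedges {v} (S.erase v)) = #{w ∈ S | G.Adj v w} := by
    simp [card_interedges_eq_sum, filter_erase]
  rw [hloop, hdeg]
  omega

theorem card_interedges_self_eq_add_of_sdiff {A S : Finset V} (hAS : A ⊆ S)
    (hcut : G.interedges A (S \ A) = ∅) :
    #(G.interedges S S) = #(G.interedges A A) + #(G.interedges (S \ A) (S \ A)) := by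
  conv_lhs => rw [← union_sdiff_of_subset hAS]
  rw [card_interedges_union_self G disjoint_sdiff, hcut, card_empty, mul_zero, add_zero]

theorem card_interedges_self_le (S : Finset V) : #(G.interedges S S) ≤ #S * (#S - 1) := by
  rw [card_interedges_eq_sum, ← smul_eq_mul, ← sum_const]
  refine sum_le_sum fun v hv => (card_le_card fun w hw => ?_).trans (card_erase_of_mem hv).le
  rw [mem_filter] at hw
  exact mem_erase.2 ⟨hw.2.ne', hw.1⟩

variable {G}

theorem IsPathIn.mem_of_adj_of_lt_card_add_card {S : Finset V} {l : List V}
    (hmax : ∀ l', G.IsPathIn S l' → l'.length ≤ l.length) (hl : G.IsPathIn S l) {a z : V}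
    (ha : a ∈ l.head?) (hz : z ∈ l.getLast?)
    (hcard : l.length - 1 < #{w ∈ S | G.Adj a w} + #{w ∈ S | G.Adj z w})
    {w u : V} (hw : w ∈ l) (hu : u ∈ S) (hwu : G.Adj w u) : u ∈ l := by
  have hs : ∀ y ∈ ({v ∈ S | G.Adj a v} : Finset V), y ∈ l ∧ y ∉ l.head? := by
    intro y hy
    rw [mem_filter] at hy
    exact ⟨hl.mem_of_head?_adj hmax (List.Perm.refl l) ha hy.1 hy.2,
      fun h => hy.2.ne (Option.mem_unique ha h)⟩
  have ht : ∀ x ∈ ({v ∈ S | G.Adj z v} : Finset V), x ∈ l ∧ x ∉ l.getLast? := by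
    intro x hx
    rw [mem_filter] at hx
    exact ⟨hl.reverse.mem_of_head?_adj hmax (List.reverse_perm l)
      (by rwa [List.head?_reverse]) hx.1 hx.2, fun h => hx.2.ne (Option.mem_unique hz h)⟩
  obtain ⟨l₁, l₂, rfl, ⟨x, hx, hxt⟩, ⟨y, hy, hys⟩⟩ :=
    List.exists_append_getLast?_mem_head?_mem hs ht hcard
  have hl₁ : l₁ ≠ [] := by rintro rfl; simp at hx
  have hl₂ : l₂ ≠ [] := by rintro rfl; simp at hy
  rw [List.head?_append_of_ne_nil _ hl₁] at ha
  rw [List.getLast?_append_of_ne_nil _ hl₂] at hz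
  have := G.symm
  obtain ⟨hc, hcyc⟩ := hl.1.reverse_append_of_cross ha hx hy hz (mem_filter.1 hys).2
    (mem_filter.1 hxt).2
  have hperm : (l₂.reverse ++ l₁).Perm (l₁ ++ l₂) :=
    ((List.reverse_perm l₂).append_right l₁).trans List.perm_append_comm
  -- Every rotation of the cycle is again a longest path in `S`, so it cannot be extended.
  obtain ⟨c, hcp, hc', hhead⟩ := hc.exists_perm_head?_eq hcyc (hperm.mem_iff.2 hw)
  exact (hl.of_perm hc' (hcp.trans hperm)).mem_of_head?_adj hmax (hcp.trans hperm) hhead hu hwu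

theorem exists_isPathIn_length_gt {S : Finset V} {k : ℕ}
    (hconn : ∀ A ⊂ S, A.Nonempty → (G.interedges A (S \ A)).Nonempty)
    (hdeg : ∀ v ∈ S, k - 1 ≤ 2 * #{w ∈ S | G.Adj v w}) (hkS : k ≤ #S)
    {l : List V} (hl : G.IsPathIn S l) (hne : l ≠ []) (hlk : l.length < k) :
    ∃ l', G.IsPathIn S l' ∧ l.length < l'.length := by
  by_contra! hmax
  obtain ⟨a, ha⟩ : ∃ a, a ∈ l.head? := ⟨_, List.head?_eq_some_head hne⟩
  obtain ⟨z, hz⟩ : ∃ z, z ∈ l.getLast? := ⟨_, List.getLast?_eq_some_getLast hne⟩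
  have hcard : l.length - 1 < #{w ∈ S | G.Adj a w} + #{w ∈ S | G.Adj z w} := by
    have := hdeg a (hl.2.2 a (List.mem_of_mem_head? ha))
    have := hdeg z (hl.2.2 z (List.mem_of_mem_getLast? hz))
    have := List.length_pos_of_ne_nil hne
    omega
  set A := l.toFinset
  have hAS : A ⊂ S := by
    refine Finset.ssubset_iff_subset_ne.2 ⟨fun v hv => hl.2.2 v (List.mem_toFinset.1 hv), ?_⟩
    intro h
    have := congrArg card h
    rw [List.toFinset_card_of_nodup hl.2.1] at this
    omega
  obtain ⟨⟨w, u⟩, hwu⟩ := hconn A hAS ⟨a, List.mem_toFinset.2 (List.mem_of_mem_head? ha)⟩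
  rw [mem_interedges_iff, mem_sdiff, List.mem_toFinset, List.mem_toFinset] at hwu
  exact hwu.2.1.2 (hl.mem_of_adj_of_lt_card_add_card hmax ha hz hcard hwu.1 hwu.2.1.1 hwu.2.2)

theorem exists_isPathIn_length_ge {S : Finset V} {k : ℕ}
    (hconn : ∀ A ⊂ S, A.Nonempty → (G.interedges A (S \ A)).Nonempty)
    (hdeg : ∀ v ∈ S, k - 1 ≤ 2 * #{w ∈ S | G.Adj v w}) (hkS : k ≤ #S) :
    ∃ l, G.IsPathIn S l ∧ k ≤ l.length := by
  suffices ∀ j ≤ k, ∃ l, G.IsPathIn S l ∧ j ≤ l.length from this k le_rfl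
  intro j hj
  induction j with
  | zero => exact ⟨[], ⟨List.isChain_nil, List.nodup_nil, by simp⟩, le_rfl⟩
  | succ j ih =>
    obtain ⟨l, hl, hjl⟩ := ih (by omega)
    rcases hjl.lt_or_eq with hjl | rfl
    · exact ⟨l, hl, hjl⟩
    rcases eq_or_ne l [] with rfl | hne
    · obtain ⟨v, hv⟩ := card_pos.1 (by omega : 0 < #S)
      exact ⟨[v], ⟨List.isChain_singleton v, List.nodup_singleton v, by simpa⟩, le_rfl⟩
    · exact exists_isPathIn_length_gt hconn hdeg hkS hl hne hj

variable (G)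

theorem card_interedges_self_le_of_forall_length_lt {k : ℕ}
    (hfree : ∀ l : List V, l.IsChain G.Adj → l.Nodup → l.length < k) (S : Finset V) :
    #(G.interedges S S) ≤ (k - 2) * #S := by
  induction S using Finset.strongInduction with | H S ih =>
  by_cases hlow : ∃ v ∈ S, 2 * #{w ∈ S | G.Adj v w} ≤ k - 2
  · obtain ⟨v, hv, hdeg⟩ := hlow
    have := ih _ (erase_ssubset hv)
    rw [card_erase_of_mem hv] at this
    have : (k - 2) * (#S - 1) + (k - 2) = (k - 2) * #S := by
      rw [← Nat.mul_succ, Nat.succ_eq_add_one, Nat.sub_add_cancel (card_pos.2 ⟨v, hv⟩)]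
    rw [card_interedges_self_erase G hv]
    omega
  by_cases hcut : ∃ A ⊂ S, A.Nonempty ∧ G.interedges A (S \ A) = ∅
  · obtain ⟨A, hAS, hA, hcut⟩ := hcut
    have := ih A hAS
    have := ih _ (sdiff_ssubset hAS.subset hA)
    rw [card_interedges_self_eq_add_of_sdiff G hAS.subset hcut,
      ← card_sdiff_add_card_eq_card hAS.subset, mul_add]
    omega
  push Not at hlow hcut
  by_cases hkS : k ≤ #S
  · obtain ⟨l, hl, hkl⟩ := exists_isPathIn_length_ge hcut (fun v hv => by
      have := hlow v hv; omega) hkS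
    exact absurd (hfree l hl.1 hl.2.1) hkl.not_gt
  · calc #(G.interedges S S) ≤ #S * (#S - 1) := G.card_interedges_self_le S
      _ ≤ (k - 2) * #S := by rw [mul_comm]; exact Nat.mul_le_mul_right _ (by omega)

end SimpleGraph

/-- Erdős–Gallai: an `n`-vertex graph containing no path on `k` vertices
(`k ≥ 2`) has at most `(k-2)n/2` edges. -/
theorem erdos_gallai_paths (n k : ℕ) (hk : 2 ≤ k) (G : SimpleGraph (Fin n))
    [DecidableRel G.Adj]
    (hPfree : ∀ (u v : Fin n) (p : G.Walk u v), p.IsPath → p.length + 1 < k) :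
    (G.edgeFinset.card : ℝ) ≤ (k - 2) * n / 2 := by
  have h := G.card_interedges_self_le_of_forall_length_lt
    (fun l => G.length_lt_of_isChain_of_nodup (by omega) hPfree) univ
  rw [G.card_interedges_univ, card_univ, Fintype.card_fin] at h
  have h' : ((2 * #G.edgeFinset : ℕ) : ℝ) ≤ ((k - 2) * n : ℕ) := by exact_mod_cast h
  push_cast [Nat.cast_sub hk] at h'
  linarith
end

section
/- Let G be a graph, let u, v be adjacent vertices of G, and let G_{u→v} be the Kelmans transformation of G from u to v. Then the circumference of G_{u→v} is at most the circumference of G, i.e., c(G_{u→v}) ≤ c(G). -/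
variable {V : Type*}

/-- `kelmansP G u v = P_v(u)`: the neighbors of `u` other than `v` that are
not neighbors of `v`. -/
def kelmansP (G : SimpleGraph V) (u v : V) : Set V :=
  {w | G.Adj u w ∧ w ≠ v ∧ ¬ G.Adj v w}

/-- The Kelmans transformation `G_{u→v}`: delete the edges from `u` to the
vertices of `P_v(u)` and add edges from `v` to the vertices of `P_v(u)`. -/
def kelmans (G : SimpleGraph V) (u v : V) : SimpleGraph V where
  Adj x y :=
    (G.Adj x y ∧ ¬(x = u ∧ y ∈ kelmansP G u v) ∧ ¬(y = u ∧ x ∈ kelmansP G u v)) ∨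
      (x = v ∧ y ∈ kelmansP G u v) ∨ (y = v ∧ x ∈ kelmansP G u v)
  symm := by
    constructor
    intro x y h
    rcases h with ⟨h1, h2, h3⟩ | h | h
    · exact Or.inl ⟨h1.symm, h3, h2⟩
    · exact Or.inr (Or.inr h)
    · exact Or.inr (Or.inl h)
  loopless := by
    constructor
    intro x h
    rcases h with ⟨h, -⟩ | ⟨rfl, -, h, -⟩ | ⟨rfl, -, h, -⟩
    · exact G.irrefl h
    · exact h rfl
    · exact h rfl

/-- The circumference of a graph: the length of a longest cycle
(`0` if there is no cycle). -/
noncomputable def circumference (G : SimpleGraph V) : ℕ :=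
  sSup {n | ∃ (u : V) (c : G.Walk u u), c.IsCycle ∧ c.length = n}

/-- The number of vertices of a longest path of `G`. -/
noncomputable def longestPathVerts (G : SimpleGraph V) : ℕ :=
  sSup {n | ∃ (u v : V) (p : G.Walk u v), p.IsPath ∧ p.length + 1 = n}

/-!
Write `H = G_{u→v}` and `P = P_v(u)`. Edges of `H` avoiding `v` are edges of `G`, and the
`H`-neighbours of `u` other than `v` are common `G`-neighbours of `u` and `v`; so a cycle of `H`
avoiding `v` is a cycle of `G`. Write a cycle of `H` through `v` as `v a … b v` and compare its
two edges at `v` with `G`: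
* if `va` and `vb` are edges of `G`, the cycle is a cycle of `G`;
* if `a, b ∈ P`, exchanging `u` and `v` gives a cycle of `G`;
* if `a ∈ P` and `vb ∈ E(G)` with `u` off the cycle, then `v u a … b v` is a longer cycle of `G`;
* if `a ∈ P` and `vb ∈ E(G)` with the cycle `v a … x u … b v`, reversing the segment `a … x`
  gives the cycle `v x … a u … b v` of `G`.
-/

open SimpleGraph

theorem List.isChain_cons_append_singleton_iff {α : Type*} {R : α → α → Prop} {x y : α}
    {l : List α} (hl : l ≠ []) :
    (x :: (l ++ [y])).IsChain R ↔
      l.IsChain R ∧ (∀ a ∈ l.head?, R x a) ∧ ∀ b ∈ l.getLast?, R b y := by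
  rw [List.isChain_cons, List.isChain_append, List.head?_append_of_ne_nil _ hl]
  simp [and_comm, and_assoc]

namespace SimpleGraph

/-- `z :: m` lists the vertices of a cycle of `G` in cyclic order. -/
structure IsCycleList (G : SimpleGraph V) (z : V) (m : List V) : Prop where
  nodup : (z :: m).Nodup
  two_le_length : 2 ≤ m.length
  isChain : m.IsChain G.Adj
  adj_head : ∀ a ∈ m.head?, G.Adj z a
  adj_getLast : ∀ b ∈ m.getLast?, G.Adj z b

variable {G : SimpleGraph V} {z : V} {m : List V}

namespace IsCycleList

theorem not_mem (h : G.IsCycleList z m) : z ∉ m :=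
  (List.nodup_cons.1 h.nodup).1

theorem ne_nil (h : G.IsCycleList z m) : m ≠ [] :=
  List.ne_nil_of_length_pos (by have := h.two_le_length; omega)

theorem isChain_cons_append (h : G.IsCycleList z m) : (z :: (m ++ [z])).IsChain G.Adj :=
  (List.isChain_cons_append_singleton_iff h.ne_nil).2
    ⟨h.isChain, h.adj_head, fun b hb => (h.adj_getLast b hb).symm⟩

theorem exists_isCycle (h : G.IsCycleList z m) :
    ∃ c : G.Walk z z, c.IsCycle ∧ c.length = m.length + 1 := by
  let c : G.Walk z z := (Walk.ofSupport (z :: (m ++ [z])) (List.cons_ne_nil _ _)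
    h.isChain_cons_append).copy List.head_cons (by simp)
  have hsupp : c.support = z :: (m ++ [z]) := by
    rw [Walk.support_copy, Walk.support_ofSupport]
  have hlen : c.length = m.length + 1 := by
    rw [Walk.length_copy, Walk.length_ofSupport]; simp
  have hnil : ¬ c.Nil := by rw [← Walk.length_eq_zero_iff]; omega
  refine ⟨c, Walk.isCycle_iff_isPath_tail_and_le_length.2
    ⟨?_, by have := h.two_le_length; omega⟩, hlen⟩
  rw [Walk.isPath_def, Walk.support_tail_of_not_nil c hnil, hsupp, List.tail_cons]
  exact (List.perm_append_singleton _ _).nodup_iff.2 h.nodup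

theorem reverse (h : G.IsCycleList z m) : G.IsCycleList z m.reverse where
  nodup := List.nodup_cons.2
    ⟨by simpa using h.not_mem, List.nodup_reverse.2 (List.nodup_cons.1 h.nodup).2⟩
  two_le_length := by simpa using h.two_le_length
  isChain := List.isChain_reverse.2 (h.isChain.imp fun _ _ hab => hab.symm)
  adj_head := by simpa using h.adj_getLast
  adj_getLast := by simpa using h.adj_head

end IsCycleList

theorem Walk.IsCycle.isCycleList {c : G.Walk z z} (hc : c.IsCycle) :
    G.IsCycleList z c.tail.support.dropLast := by
  have hsupp : c.support = z :: (c.tail.support.dropLast ++ [z]) := by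
    rw [Walk.dropLast_support_concat, Walk.support_tail_of_not_nil c hc.not_nil,
      Walk.cons_tail_support]
  have hlen : 2 ≤ c.tail.support.dropLast.length := by
    have := hc.three_le_length
    simp only [List.length_dropLast, Walk.length_support, Walk.length_tail]
    omega
  obtain ⟨hchain, hhead, hlast⟩ :=
    (List.isChain_cons_append_singleton_iff (List.ne_nil_of_length_pos (by omega))).1
      (hsupp ▸ c.isChain_adj_support)
  refine ⟨?_, hlen, hchain, hhead, fun b hb => (hlast b hb).symm⟩
  refine (List.perm_append_singleton _ _).nodup_iff.1 ?_
  rw [Walk.dropLast_support_concat]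
  exact hc.isPath_tail.support_nodup

theorem circumference_le {n : ℕ} (h : ∀ (a : V) (c : G.Walk a a), c.IsCycle → c.length ≤ n) :
    circumference G ≤ n :=
  csSup_le' fun _ ⟨a, c, hc, hn⟩ => hn ▸ h a c hc

theorem Walk.IsCycle.length_le_circumference [Finite V] {c : G.Walk z z} (hc : c.IsCycle) :
    c.length ≤ circumference G := by
  have := Fintype.ofFinite V
  refine le_csSup ⟨Fintype.card V, ?_⟩ ⟨z, c, hc, rfl⟩
  rintro _ ⟨a, d, hd, rfl⟩
  rw [← Walk.length_tail_add_one hd.not_nil]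
  exact hd.isPath_tail.length_lt

section Kelmans

variable {u v w x y : V}

theorem swap_apply_of_mem_kelmansP [DecidableEq V] (hw : w ∈ kelmansP G u v) :
    Equiv.swap u v w = w :=
  Equiv.swap_apply_of_ne_of_ne hw.1.ne' hw.2.1

theorem kelmans_adj_of_ne (h : (kelmans G u v).Adj x y) (hx : x ≠ v) (hy : y ≠ v) :
    G.Adj x y := by
  rcases h with ⟨h, -, -⟩ | ⟨rfl, -⟩ | ⟨rfl, -⟩
  exacts [h, absurd rfl hx, absurd rfl hy]

theorem adj_of_kelmans_adj_left (huv : u ≠ v) (h : (kelmans G u v).Adj u x) (hx : x ≠ v) :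
    G.Adj v x := by
  rcases h with ⟨h, hP, -⟩ | ⟨rfl, -⟩ | ⟨rfl, -⟩
  · by_contra hvx
    exact hP ⟨rfl, h, hx, hvx⟩
  · exact absurd rfl huv
  · exact absurd rfl hx

theorem adj_or_mem_kelmansP_of_kelmans_adj (h : (kelmans G u v).Adj v x) :
    G.Adj v x ∨ x ∈ kelmansP G u v := by
  rcases h with ⟨h, -⟩ | ⟨-, hx⟩ | ⟨-, hv⟩
  exacts [Or.inl h, Or.inr hx, absurd rfl hv.2.1]

theorem kelmans_adj_swap [DecidableEq V] (huv : u ≠ v) (h : (kelmans G u v).Adj x y)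
    (hx : x ≠ v) (hy : y ≠ v) : G.Adj (Equiv.swap u v x) (Equiv.swap u v y) := by
  by_cases hxu : x = u
  · subst hxu
    rw [Equiv.swap_apply_left, Equiv.swap_apply_of_ne_of_ne h.ne' hy]
    exact adj_of_kelmans_adj_left huv h hy
  by_cases hyu : y = u
  · subst hyu
    rw [Equiv.swap_apply_left, Equiv.swap_apply_of_ne_of_ne hxu hx]
    exact (adj_of_kelmans_adj_left huv h.symm hx).symm
  rw [Equiv.swap_apply_of_ne_of_ne hxu hx, Equiv.swap_apply_of_ne_of_ne hyu hy]
  exact kelmans_adj_of_ne h hx hy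

theorem Walk.edges_subset_edgeSet_of_kelmans {p : (kelmans G u v).Walk x y}
    (hv : v ∉ p.support) : ∀ e ∈ p.edges, e ∈ G.edgeSet := by
  intro e he
  induction e using Sym2.ind with
  | _ a b =>
    exact kelmans_adj_of_ne (p.adj_of_mem_edges he)
      (ne_of_mem_of_not_mem (p.fst_mem_support_of_mem_edges he) hv)
      (ne_of_mem_of_not_mem (p.snd_mem_support_of_mem_edges he) hv)

namespace IsCycleList

theorem isChain_of_kelmans (h : (kelmans G u v).IsCycleList v m) : m.IsChain G.Adj :=
  h.isChain.imp_of_mem_imp fun _ _ ha hb hab =>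
    kelmans_adj_of_ne hab (ne_of_mem_of_not_mem ha h.not_mem)
      (ne_of_mem_of_not_mem hb h.not_mem)

theorem of_kelmans (h : (kelmans G u v).IsCycleList v m) (ha : ∀ a ∈ m.head?, G.Adj v a)
    (hb : ∀ b ∈ m.getLast?, G.Adj v b) : G.IsCycleList v m :=
  ⟨h.nodup, h.two_le_length, h.isChain_of_kelmans, ha, hb⟩

theorem map_swap_of_kelmans [DecidableEq V] (huv : u ≠ v) (h : (kelmans G u v).IsCycleList v m)
    (ha : ∀ a ∈ m.head?, a ∈ kelmansP G u v) (hb : ∀ b ∈ m.getLast?, b ∈ kelmansP G u v) :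
    G.IsCycleList u (m.map (Equiv.swap u v)) where
  nodup := by
    simpa using List.Nodup.map (Equiv.swap u v).injective h.nodup
  two_le_length := by simpa using h.two_le_length
  isChain := (List.isChain_map _).2 <| h.isChain.imp_of_mem_imp fun _ _ ha hb hab =>
    kelmans_adj_swap huv hab (ne_of_mem_of_not_mem ha h.not_mem)
      (ne_of_mem_of_not_mem hb h.not_mem)
  adj_head := by
    simp only [List.head?_map, Option.mem_map]
    rintro _ ⟨a, ha', rfl⟩
    rw [swap_apply_of_mem_kelmansP (ha a ha')]
    exact (ha a ha').1
  adj_getLast := by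
    simp only [List.getLast?_map, Option.mem_map]
    rintro _ ⟨b, hb', rfl⟩
    rw [swap_apply_of_mem_kelmansP (hb b hb')]
    exact (hb b hb').1

theorem cons_of_kelmans (huv : G.Adj u v) (h : (kelmans G u v).IsCycleList v m) (hu : u ∉ m)
    (ha : ∀ a ∈ m.head?, a ∈ kelmansP G u v) (hb : ∀ b ∈ m.getLast?, G.Adj v b) :
    G.IsCycleList v (u :: m) where
  nodup := List.nodup_cons.2 ⟨by simpa [huv.ne'] using h.not_mem,
    List.nodup_cons.2 ⟨hu, (List.nodup_cons.1 h.nodup).2⟩⟩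
  two_le_length := h.two_le_length.trans (Nat.le_succ _)
  isChain := h.isChain_of_kelmans.cons fun a ha' => (ha a ha').1
  adj_head := by simpa using huv.symm
  adj_getLast := by
    rw [← List.singleton_append, List.getLast?_append_of_ne_nil _ h.ne_nil]
    exact hb

theorem reverse_append_of_kelmans (huv : G.Adj u v) {m₁ m₂ : List V}
    (h : (kelmans G u v).IsCycleList v (m₁ ++ u :: m₂))
    (ha : ∀ a ∈ (m₁ ++ u :: m₂).head?, a ∈ kelmansP G u v)
    (hb : ∀ b ∈ (m₁ ++ u :: m₂).getLast?, G.Adj v b) :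
    G.IsCycleList v (m₁.reverse ++ u :: m₂) := by
  have hm₁ : m₁ ≠ [] := by
    rintro rfl
    exact G.irrefl (ha u rfl).1
  have hG := h.isChain_of_kelmans
  have hperm : (m₁.reverse ++ u :: m₂).Perm (m₁ ++ u :: m₂) :=
    (List.reverse_perm m₁).append_right _
  refine ⟨(hperm.cons v).nodup_iff.2 h.nodup, by simpa using h.two_le_length, ?_, ?_, ?_⟩
  · have hu : (u :: m₁).IsChain G.Adj := hG.left_of_append.cons fun a ha' =>
      (ha a (by rwa [List.head?_append_of_ne_nil _ hm₁])).1
    refine List.isChain_split.2 ⟨?_, (List.isChain_split.1 hG).2⟩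
    simpa using List.isChain_reverse.2 (hu.imp fun _ _ hab => hab.symm)
  · intro a ha'
    rw [List.head?_append_of_ne_nil _ (by simpa using hm₁), List.head?_reverse] at ha'
    have hau : (kelmans G u v).Adj a u :=
      (List.isChain_append.1 (List.isChain_split.1 h.isChain).1).2.2 a ha' u rfl
    exact adj_of_kelmans_adj_left huv.ne hau.symm
      (ne_of_mem_of_not_mem (List.mem_append_left _ (List.mem_of_mem_getLast? ha')) h.not_mem)
  · rwa [List.getLast?_append_of_ne_nil _ (List.cons_ne_nil _ _)] at hb ⊢

theorem exists_of_kelmans_of_mem_kelmansP_head (huv : G.Adj u v)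
    (h : (kelmans G u v).IsCycleList v m) (ha : ∀ a ∈ m.head?, a ∈ kelmansP G u v)
    (hb : ∀ b ∈ m.getLast?, G.Adj v b) : ∃ m', G.IsCycleList v m' ∧ m.length ≤ m'.length := by
  by_cases hu : u ∈ m
  · obtain ⟨m₁, m₂, rfl⟩ := List.append_of_mem hu
    exact ⟨_, h.reverse_append_of_kelmans huv ha hb, by simp⟩
  · exact ⟨_, h.cons_of_kelmans huv hu ha hb, by simp⟩

theorem exists_of_kelmans (huv : G.Adj u v) (h : (kelmans G u v).IsCycleList v m) :
    ∃ z m', G.IsCycleList z m' ∧ m.length ≤ m'.length := by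
  classical
  obtain ⟨a, ha⟩ := Option.ne_none_iff_exists'.1 (mt List.head?_eq_none_iff.1 h.ne_nil)
  obtain ⟨b, hb⟩ := Option.ne_none_iff_exists'.1 (mt List.getLast?_eq_none_iff.1 h.ne_nil)
  rcases adj_or_mem_kelmansP_of_kelmans_adj (h.adj_head a ha) with hva | hva <;>
    rcases adj_or_mem_kelmansP_of_kelmans_adj (h.adj_getLast b hb) with hvb | hvb
  · exact ⟨v, m, h.of_kelmans (by simpa [ha]) (by simpa [hb]), le_rfl⟩
  · obtain ⟨m', hm', hlen⟩ := h.reverse.exists_of_kelmans_of_mem_kelmansP_head huv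
      (by simpa [hb]) (by simpa [ha])
    exact ⟨v, m', hm', by simpa using hlen⟩
  · exact ⟨v, h.exists_of_kelmans_of_mem_kelmansP_head huv (by simpa [ha]) (by simpa [hb])⟩
  · exact ⟨u, _, h.map_swap_of_kelmans huv.ne (by simpa [ha]) (by simpa [hb]), by simp⟩

end IsCycleList

theorem Walk.IsCycle.exists_isCycle_length_le_of_kelmans (huv : G.Adj u v)
    {c : (kelmans G u v).Walk x x} (hc : c.IsCycle) :
    ∃ (b : V) (d : G.Walk b b), d.IsCycle ∧ c.length ≤ d.length := by
  classical
  by_cases hv : v ∈ c.support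
  · obtain ⟨z, m', hm', hlen⟩ := (hc.rotate hv).isCycleList.exists_of_kelmans huv
    obtain ⟨d, hd, hdlen⟩ := hm'.exists_isCycle
    refine ⟨z, d, hd, ?_⟩
    simp only [List.length_dropLast, Walk.length_support, Walk.length_tail,
      Walk.length_rotate] at hlen
    omega
  · exact ⟨x, _, hc.transfer (Walk.edges_subset_edgeSet_of_kelmans hv),
      (Walk.length_transfer _ _).ge⟩

end Kelmans

end SimpleGraph

/-- The Kelmans transformation does not increase the circumference. -/
theorem circumference_kelmans_le {V : Type*} [Fintype V] (G : SimpleGraph V)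
    (u v : V) (huv : G.Adj u v) :
    circumference (kelmans G u v) ≤ circumference G := by
  refine circumference_le fun _ c hc => ?_
  obtain ⟨_, d, hd, hcd⟩ := hc.exists_isCycle_length_le_of_kelmans huv
  exact hcd.trans hd.length_le_circumference
end

section
/- Let t ≥ 2 and let G, H be graphs on the same vertex set with E(H) ⊊ E(G), where G is t-clique connected (any two vertices are joined by a chain of pairwise intersecting t-cliques) and at least one edge of E(G) \ E(H) lies in a t-clique of G. Then ρ_t(H) < ρ_t(G), where ρ_t(G) = max { t·∑_{{i_1,...,i_t} ∈ K_t(G)} x_{i_1}···x_{i_t} : x ≥ 0, ∑_i x_i^t = 1 }. -/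
open scoped Classical in
/-- The `t`-clique spectral radius of a graph `G`:
`ρ_t(G) = max { t·∑_{S ∈ K_t(G)} ∏_{i ∈ S} x_i : x ≥ 0, ∑_i x_i^t = 1 }`. -/
noncomputable def cliqueSpectralRadius {V : Type*} [Fintype V]
    (G : SimpleGraph V) (t : ℕ) : ℝ :=
  sSup {r : ℝ | ∃ x : V → ℝ, (∀ i, 0 ≤ x i) ∧ (∑ i, x i ^ t) = 1 ∧
    r = t * ∑ S ∈ G.cliqueFinset t, ∏ i ∈ S, x i}


open scoped Classical in
/-- `G` is `t`-clique connected: any two vertices are joined by a chain of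
pairwise intersecting `t`-cliques. -/
def TCliqueConnected {V : Type*} [Fintype V] [DecidableEq V]
    (G : SimpleGraph V) (t : ℕ) : Prop :=
  ∀ i j : V, ∃ (s : ℕ) (c : Fin (s + 1) → Finset V),
    (∀ m, c m ∈ G.cliqueFinset t) ∧ i ∈ c 0 ∧ j ∈ c (Fin.last s) ∧
      ∀ m : Fin s, (c m.castSucc ∩ c m.succ).Nonempty

section Aux
open Finset
open scoped Classical


lemma rpow_inv_natpow (t : ℕ) (ht : t ≠ 0) {c : ℝ} (hc : 0 ≤ c) :
    (c ^ ((t : ℝ))⁻¹) ^ t = c := by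
  rw [← Real.rpow_natCast (c ^ ((t:ℝ))⁻¹) t, ← Real.rpow_mul hc,
    inv_mul_cancel₀ (by exact_mod_cast ht), Real.rpow_one]

lemma natpow_rpow_inv (t : ℕ) (ht : t ≠ 0) {c : ℝ} (hc : 0 ≤ c) :
    ((c ^ t : ℝ)) ^ ((t : ℝ))⁻¹ = c := by
  rw [← Real.rpow_natCast c t, ← Real.rpow_mul hc,
    mul_inv_cancel₀ (by exact_mod_cast ht), Real.rpow_one]

lemma pow_sub_pow_ge (t : ℕ) {a b : ℝ} (hb : 0 ≤ b) (hba : b ≤ a) :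
    (a - b) * (t * b ^ (t - 1)) ≤ a ^ t - b ^ t := by
  rw [← geom_sum₂_mul a b t]
  have hsum : (t : ℝ) * b ^ (t-1) ≤ ∑ i ∈ range t, a ^ i * b ^ (t - 1 - i) := by
    have := Finset.card_nsmul_le_sum (range t) (fun i => a ^ i * b ^ (t - 1 - i))
      (b ^ (t-1)) ?_
    · simpa [nsmul_eq_mul] using this
    · intro i hi
      have hit : i ≤ t - 1 := by have := Finset.mem_range.1 hi; omega
      calc b ^ (t-1) = b ^ i * b ^ (t - 1 - i) := by rw [← pow_add]; congr 1; omega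
        _ ≤ a ^ i * b ^ (t - 1 - i) :=
          mul_le_mul_of_nonneg_right (pow_le_pow_left₀ hb hba i) (pow_nonneg hb _)
  have hab : 0 ≤ a - b := sub_nonneg.2 hba
  calc (a - b) * ((t:ℝ) * b ^ (t-1)) = ((t:ℝ) * b ^ (t-1)) * (a - b) := by ring
    _ ≤ (∑ i ∈ range t, a ^ i * b ^ (t - 1 - i)) * (a - b) :=
      mul_le_mul_of_nonneg_right hsum hab

variable {V : Type*} [Fintype V] [DecidableEq V]

omit [DecidableEq V] in
lemma feas_le_one {t : ℕ} (ht : 2 ≤ t) {x : V → ℝ} (hx0 : ∀ i, 0 ≤ x i)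
    (hx1 : (∑ i, x i ^ t) = 1) (j : V) : x j ≤ 1 := by
  have h1 : x j ^ t ≤ 1 := by
    rw [← hx1]
    exact Finset.single_le_sum (f := fun i => x i ^ t)
      (fun i _ => pow_nonneg (hx0 i) t) (mem_univ j)
  exact (pow_le_one_iff_of_nonneg (hx0 j) (by omega)).1 h1

set_option maxHeartbeats 2000000 in
lemma perturb (G : SimpleGraph V) (t : ℕ) (ht : 2 ≤ t) {x : V → ℝ}
    (hx0 : ∀ i, 0 ≤ x i) (hx1 : (∑ i, x i ^ t) = 1)
    {K : Finset V} (hK : K ∈ G.cliqueFinset t)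
    {u v : V} (hu : u ∈ K) (hxu : 0 < x u) (hv : v ∈ K) (hxv : x v = 0) :
    ∃ z : V → ℝ, (∀ i, 0 ≤ z i) ∧ (∑ i, z i ^ t) = 1 ∧
      (t : ℝ) * ∑ S ∈ G.cliqueFinset t, ∏ i ∈ S, x i
        < (t : ℝ) * ∑ S ∈ G.cliqueFinset t, ∏ i ∈ S, z i := by
  have htne : (t : ℕ) ≠ 0 := by omega
  have ht0 : (0:ℝ) < t := by positivity
  set Z : Finset V := K.filter (fun i => x i = 0) with hZdef
  have hvZ : v ∈ Z := mem_filter.2 ⟨hv, hxv⟩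
  have huZ : u ∉ Z := fun h => absurd ((mem_filter.1 h).2) (ne_of_gt hxu)
  set k : ℕ := Z.card with hkdef
  have hk1 : 1 ≤ k := Finset.card_pos.2 ⟨v, hvZ⟩
  have hKcard : K.card = t := (SimpleGraph.mem_cliqueFinset_iff.1 hK).2
  have hkt : k < t := by
    have hsub : Z ⊆ K.erase u := fun i hi =>
      Finset.mem_erase.2 ⟨fun h => huZ (h ▸ hi), (mem_filter.1 hi).1⟩
    have := Finset.card_le_card hsub
    rw [Finset.card_erase_of_mem hu, hKcard] at this
    omega
  set a : ℝ := x u with hadef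
  set A : ℝ := a ^ t with hAdef
  have hA : 0 < A := pow_pos hxu t
  set W : Finset V := (K.filter (fun i => ¬ x i = 0)).erase u with hWdef
  set P : ℝ := ∏ i ∈ W, x i with hPdef
  have hP : 0 < P := by
    apply Finset.prod_pos
    intro i hi
    have := (mem_filter.1 (Finset.mem_of_mem_erase hi)).2
    exact lt_of_le_of_ne (hx0 i) (Ne.symm this)
  set N : ℝ := ((G.cliqueFinset t).card : ℝ) with hNdef
  have hN0 : 0 ≤ N := Nat.cast_nonneg _
  have hk0 : (0:ℝ) < k := by exact_mod_cast hk1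
  set c0 : ℝ := (A/2) ^ ((t:ℝ))⁻¹ with hc0def
  have hc0 : 0 < c0 := Real.rpow_pos_of_pos (by linarith) _
  set C1 : ℝ := (k:ℝ) / ((t:ℝ) * c0 ^ (t-1)) with hC1def
  have hC1 : 0 < C1 := div_pos hk0 (mul_pos ht0 (pow_pos hc0 _))
  set δ : ℝ := c0 * P / (N * C1 + 1) with hδdef
  have hδ : 0 < δ := div_pos (mul_pos hc0 hP) (by nlinarith)
  set ε : ℝ := min (A/(2*k)) (min (δ^t/2) 1) with hεdef
  have hε : 0 < ε := lt_min (div_pos hA (by linarith)) (lt_min (half_pos (pow_pos hδ t)) one_pos)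
  have hε1 : ε ≤ 1 := le_trans (min_le_right _ _) (min_le_right _ _)
  have hεδ : ε ≤ δ^t/2 := le_trans (min_le_right _ _) (min_le_left _ _)
  have hkε : (k:ℝ) * ε ≤ A/2 := by
    have h1 : ε ≤ A/(2*k) := min_le_left _ _
    calc (k:ℝ) * ε ≤ (k:ℝ) * (A/(2*k)) := by nlinarith
      _ = A/2 := by rw [mul_div_assoc', mul_comm, mul_comm 2 (k:ℝ), ← div_div, mul_div_assoc, div_self (ne_of_gt hk0), mul_one]
  set e : ℝ := ε ^ ((t:ℝ))⁻¹ with hedef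
  have he : 0 < e := Real.rpow_pos_of_pos hε _
  have he1 : e ≤ 1 := Real.rpow_le_one hε.le hε1 (inv_nonneg.2 ht0.le)
  have het : e ^ t = ε := rpow_inv_natpow t htne hε.le
  have hAk : A/2 ≤ A - k*ε := by linarith
  have hAk0 : 0 < A - k*ε := lt_of_lt_of_le (by linarith) hAk
  set b : ℝ := (A - k*ε) ^ ((t:ℝ))⁻¹ with hbdef
  have hb0 : 0 < b := Real.rpow_pos_of_pos hAk0 _
  have hbt : b ^ t = A - k*ε := rpow_inv_natpow t htne hAk0.le
  have hbc0 : c0 ≤ b := Real.rpow_le_rpow (by linarith) hAk (inv_nonneg.2 ht0.le)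
  have hba : b ≤ a := by
    have hkε0 : 0 < (k:ℝ) * ε := mul_pos hk0 hε
    have h1 : b ^ t ≤ a ^ t := by rw [hbt, ← hAdef]; linarith
    exact (pow_le_pow_iff_left₀ hb0.le hxu.le htne).1 h1
  have hab : a - b ≤ C1 * ε := by
    have h1 := pow_sub_pow_ge t hb0.le hba
    rw [hbt, ← hAdef] at h1
    have h2 : (t:ℝ) * c0 ^ (t-1) ≤ (t:ℝ) * b ^ (t-1) := by
      apply mul_le_mul_of_nonneg_left (pow_le_pow_left₀ hc0.le hbc0 _) ht0.le
    have h3 : (a - b) * ((t:ℝ) * c0 ^ (t-1)) ≤ (k:ℝ) * ε := by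
      have hab0 : 0 ≤ a - b := sub_nonneg.2 hba
      nlinarith
    rw [hC1def, div_mul_eq_mul_div, le_div_iff₀ (mul_pos ht0 (pow_pos hc0 _))]
    linarith
  -- the perturbed vector
  set z : V → ℝ := fun i => if i ∈ Z then e else if i = u then b else x i with hzdef
  have hz0 : ∀ i, 0 ≤ z i := by
    intro i; rw [hzdef]; dsimp only
    split_ifs
    · exact he.le
    · exact hb0.le
    · exact hx0 i
  have hzZ : ∀ i ∈ Z, z i = e := by intro i hi; simp [hzdef, hi]
  have hzu : z u = b := by simp [hzdef, huZ]
  have hzx : ∀ i, i ∉ Z → i ≠ u → z i = x i := by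
    intro i h1 h2; simp [hzdef, h1, h2]
  refine ⟨z, hz0, ?_, ?_⟩
  · -- constraint preserved
    have key : ∑ i ∈ insert u Z, z i ^ t = ∑ i ∈ insert u Z, x i ^ t := by
      rw [Finset.sum_insert huZ, Finset.sum_insert huZ]
      have h1 : ∑ i ∈ Z, z i ^ t = (k:ℝ) * ε := by
        rw [Finset.sum_congr rfl (fun i hi => by rw [hzZ i hi, het])]
        rw [Finset.sum_const, nsmul_eq_mul, hkdef]
      have h2 : ∑ i ∈ Z, x i ^ t = 0 := by
        apply Finset.sum_eq_zero
        intro i hi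
        rw [(mem_filter.1 hi).2, zero_pow htne]
      rw [h1, h2, hzu, hbt, ← hadef, ← hAdef]
      ring
    calc ∑ i, z i ^ t
        = ∑ i ∈ Finset.univ \ insert u Z, z i ^ t + ∑ i ∈ insert u Z, z i ^ t := by
          rw [Finset.sum_sdiff (Finset.subset_univ _)]
      _ = ∑ i ∈ Finset.univ \ insert u Z, x i ^ t + ∑ i ∈ insert u Z, x i ^ t := by
          rw [key]; congr 1
          apply Finset.sum_congr rfl
          intro i hi
          have h := Finset.mem_sdiff.1 hi
          have h2 := h.2
          rw [Finset.mem_insert] at h2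
          push_neg at h2
          rw [hzx i h2.2 h2.1]
      _ = ∑ i, x i ^ t := by rw [Finset.sum_sdiff (Finset.subset_univ _)]
      _ = 1 := hx1
  · -- objective strictly increases
    have hx01 : ∀ j, x j ≤ 1 := feas_le_one ht hx0 hx1
    have hC1ε : 0 ≤ C1 * ε := le_of_lt (mul_pos hC1 hε)
    have hloss : ∀ C ∈ (G.cliqueFinset t).erase K,
        (∏ i ∈ C, x i) - (∏ i ∈ C, z i) ≤ C1 * ε := by
      intro C _
      by_cases hCZ : ∃ i ∈ C, i ∈ Z
      · obtain ⟨i, hiC, hiZ⟩ := hCZ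
        have h1 : ∏ i ∈ C, x i = 0 := Finset.prod_eq_zero hiC ((mem_filter.1 hiZ).2)
        have h2 : 0 ≤ ∏ i ∈ C, z i := Finset.prod_nonneg (fun j _ => hz0 j)
        linarith
      · push_neg at hCZ
        by_cases huC : u ∈ C
        · have hQeq : ∏ i ∈ C.erase u, z i = ∏ i ∈ C.erase u, x i := by
            apply Finset.prod_congr rfl
            intro i hi
            exact hzx i (hCZ i (Finset.mem_of_mem_erase hi)) (Finset.ne_of_mem_erase hi)
          have hx_prod : ∏ i ∈ C, x i = a * ∏ i ∈ C.erase u, x i :=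
            (Finset.mul_prod_erase C x huC).symm
          have hz_prod : ∏ i ∈ C, z i = b * ∏ i ∈ C.erase u, x i := by
            rw [← Finset.mul_prod_erase C z huC, hzu, hQeq]
          have hQ0 : 0 ≤ ∏ i ∈ C.erase u, x i := Finset.prod_nonneg fun j _ => hx0 j
          have hQ1 : ∏ i ∈ C.erase u, x i ≤ 1 :=
            Finset.prod_le_one (fun j _ => hx0 j) (fun j _ => hx01 j)
          have h3 : (a - b) * (∏ i ∈ C.erase u, x i) ≤ (a - b) * 1 :=
            mul_le_mul_of_nonneg_left hQ1 (sub_nonneg.2 hba)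
          rw [mul_one] at h3
          rw [hx_prod, hz_prod]
          have h4 : a * (∏ i ∈ C.erase u, x i) - b * (∏ i ∈ C.erase u, x i)
              = (a - b) * (∏ i ∈ C.erase u, x i) := by ring
          linarith
        · have heq : ∏ i ∈ C, z i = ∏ i ∈ C, x i :=
            Finset.prod_congr rfl (fun i hi => hzx i (hCZ i hi) (fun h => huC (h ▸ hi)))
          rw [heq]; linarith
    have hKx : ∏ i ∈ K, x i = 0 := Finset.prod_eq_zero hv hxv
    have hek : 0 < e ^ k := pow_pos he k
    have hKz : e ^ k * (c0 * P) ≤ ∏ i ∈ K, z i := by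
      have hsplit : (∏ i ∈ Z, z i) * (∏ i ∈ K.filter (fun i => ¬ x i = 0), z i)
          = ∏ i ∈ K, z i := by
        rw [hZdef]; exact Finset.prod_filter_mul_prod_filter_not K _ z
      have h1 : ∏ i ∈ Z, z i = e ^ k := by
        rw [Finset.prod_congr rfl hzZ, Finset.prod_const, hkdef]
      have huF : u ∈ K.filter (fun i => ¬ x i = 0) :=
        mem_filter.2 ⟨hu, ne_of_gt hxu⟩
      have h2 : ∏ i ∈ K.filter (fun i => ¬ x i = 0), z i = b * P := by
        rw [← Finset.mul_prod_erase _ z huF, hzu, hPdef]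
        congr 1
        rw [← hWdef]
        apply Finset.prod_congr rfl
        intro i hi
        have hi' : i ∈ K.filter (fun i => ¬ x i = 0) := by
          rw [hWdef] at hi; exact Finset.mem_of_mem_erase hi
        have hiZ : i ∉ Z := fun h => (mem_filter.1 hi').2 ((mem_filter.1 h).2)
        have hiu : i ≠ u := by rw [hWdef] at hi; exact Finset.ne_of_mem_erase hi
        exact hzx i hiZ hiu
      rw [← hsplit, h1, h2]
      exact mul_le_mul_of_nonneg_left (mul_le_mul_of_nonneg_right hbc0 hP.le)
        (pow_nonneg he.le k)
    have hsum_lt : ∑ S ∈ G.cliqueFinset t, ∏ i ∈ S, x i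
        < ∑ S ∈ G.cliqueFinset t, ∏ i ∈ S, z i := by
      have hcard : ((((G.cliqueFinset t).erase K).card : ℕ) : ℝ) ≤ N := by
        rw [hNdef]
        exact_mod_cast Finset.card_le_card (Finset.erase_subset _ _)
      have h1 : ∑ C ∈ (G.cliqueFinset t).erase K, ((∏ i ∈ C, x i) - ∏ i ∈ C, z i)
          ≤ N * (C1 * ε) := by
        calc ∑ C ∈ (G.cliqueFinset t).erase K, ((∏ i ∈ C, x i) - ∏ i ∈ C, z i)
            ≤ ((G.cliqueFinset t).erase K).card • (C1 * ε) :=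
              Finset.sum_le_card_nsmul _ _ _ hloss
          _ = ((((G.cliqueFinset t).erase K).card : ℕ) : ℝ) * (C1 * ε) := nsmul_eq_mul _ _
          _ ≤ N * (C1 * ε) := mul_le_mul_of_nonneg_right hcard hC1ε
      have h2 : ∀ (w : V → ℝ), ∑ S ∈ G.cliqueFinset t, ∏ i ∈ S, w i
          = (∏ i ∈ K, w i) + ∑ S ∈ (G.cliqueFinset t).erase K, ∏ i ∈ S, w i :=
        fun w => (Finset.add_sum_erase _ _ hK).symm
      have hNC1 : 0 ≤ N * C1 := mul_nonneg hN0 hC1.le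
      have hgain : N * (C1 * ε) < e ^ k * (c0 * P) := by
        have h3 : ε = e ^ k * e ^ (t - k) := by
          rw [← pow_add, (by omega : k + (t - k) = t), het]
        have h4 : e ^ (t - k) ≤ e := by
          calc e ^ (t - k) ≤ e ^ 1 := pow_le_pow_of_le_one he.le he1 (by omega)
            _ = e := pow_one e
        have h5 : e < δ := by
          have h6 : e ≤ (δ ^ t / 2) ^ ((t:ℝ))⁻¹ :=
            Real.rpow_le_rpow hε.le hεδ (inv_nonneg.2 ht0.le)
          have h7 : ((δ ^ t / 2 : ℝ)) ^ ((t:ℝ))⁻¹ < ((δ ^ t : ℝ)) ^ ((t:ℝ))⁻¹ :=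
            Real.rpow_lt_rpow (le_of_lt (half_pos (pow_pos hδ t)))
              (half_lt_self (pow_pos hδ t)) (inv_pos.2 ht0)
          have h8 : ((δ ^ t : ℝ)) ^ ((t:ℝ))⁻¹ = δ := natpow_rpow_inv t htne hδ.le
          linarith
        have hNpos : 0 < N * C1 + 1 := by linarith
        have hne1 : N * C1 + 1 ≠ 0 := ne_of_gt hNpos
        have h9 : (N * C1 + 1) * δ = c0 * P := by
          rw [hδdef, mul_comm, div_mul_cancel₀ _ hne1]
        calc N * (C1 * ε) = ((N * C1) * e ^ (t - k)) * e ^ k := by rw [h3]; ring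
          _ ≤ ((N * C1 + 1) * e) * e ^ k := by
              apply mul_le_mul_of_nonneg_right _ hek.le
              have s1 : (N * C1) * e ^ (t - k) ≤ (N * C1) * e :=
                mul_le_mul_of_nonneg_left h4 hNC1
              have s2 : (N * C1) * e ≤ (N * C1 + 1) * e :=
                mul_le_mul_of_nonneg_right (by linarith) he.le
              linarith
          _ < ((N * C1 + 1) * δ) * e ^ k :=
              mul_lt_mul_of_pos_right (mul_lt_mul_of_pos_left h5 hNpos) hek
          _ = e ^ k * (c0 * P) := by rw [h9]; ring
      have h10 : ∑ S ∈ (G.cliqueFinset t).erase K, ∏ i ∈ S, x i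
          - ∑ S ∈ (G.cliqueFinset t).erase K, ∏ i ∈ S, z i ≤ N * (C1 * ε) := by
        rw [← Finset.sum_sub_distrib]; exact h1
      rw [h2 x, h2 z, hKx]
      linarith
    exact mul_lt_mul_of_pos_left hsum_lt ht0


variable {V : Type*} [Fintype V] [DecidableEq V]

omit [DecidableEq V] in
lemma feas_compact (t : ℕ) (ht : 2 ≤ t) :
    IsCompact {x : V → ℝ | (∀ i, 0 ≤ x i) ∧ (∑ i, x i ^ t) = 1} := by
  apply IsCompact.of_isClosed_subset
    (isCompact_univ_pi (fun _ : V => isCompact_Icc (a := (0:ℝ)) (b := 1)))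
  · have : {x : V → ℝ | (∀ i, 0 ≤ x i) ∧ (∑ i, x i ^ t) = 1}
        = (⋂ i, {x : V → ℝ | 0 ≤ x i}) ∩ {x : V → ℝ | (∑ i, x i ^ t) = 1} := by
      ext x; simp [Set.mem_iInter]
    rw [this]
    exact IsClosed.inter
      (isClosed_iInter fun i => isClosed_le continuous_const (continuous_apply i))
      (isClosed_eq (by continuity) continuous_const)
  · rintro x ⟨hx0, hx1⟩
    rw [Set.mem_univ_pi]
    exact fun i => ⟨hx0 i, feas_le_one ht hx0 hx1 i⟩

lemma objective_continuous (G : SimpleGraph V) (t : ℕ) :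
    Continuous (fun x : V → ℝ => (t : ℝ) * ∑ S ∈ G.cliqueFinset t, ∏ i ∈ S, x i) := by
  apply Continuous.mul continuous_const
  exact continuous_finset_sum _ fun S _ => continuous_finset_prod _ fun i _ => continuous_apply i

omit [DecidableEq V] in
lemma feas_nonempty (t : ℕ) (ht : 2 ≤ t) (u : V) :
    ({x : V → ℝ | (∀ i, 0 ≤ x i) ∧ (∑ i, x i ^ t) = 1}).Nonempty := by
  refine ⟨fun i => if i = u then 1 else 0, fun i => by positivity, ?_⟩
  rw [Finset.sum_eq_single u]
  · simp
  · intro b _ hb; simp [hb, zero_pow (by omega : t ≠ 0)]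
  · simp

lemma maximizer_pos (G : SimpleGraph V) (t : ℕ) (ht : 2 ≤ t)
    (hconn : TCliqueConnected G t) {y : V → ℝ}
    (hy0 : ∀ i, 0 ≤ y i) (hy1 : (∑ i, y i ^ t) = 1)
    (hmax : ∀ z : V → ℝ, (∀ i, 0 ≤ z i) → (∑ i, z i ^ t) = 1 →
      (t:ℝ) * ∑ S ∈ G.cliqueFinset t, ∏ i ∈ S, z i
        ≤ (t:ℝ) * ∑ S ∈ G.cliqueFinset t, ∏ i ∈ S, y i)
    (v : V) : 0 < y v := by
  by_contra hv
  have hyv : y v = 0 := le_antisymm (not_lt.1 hv) (hy0 v)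
  have hex : ∃ i, 0 < y i := by
    by_contra h
    push_neg at h
    have hz : ∀ i, y i = 0 := fun i => le_antisymm (h i) (hy0 i)
    rw [Finset.sum_eq_zero (fun i _ => by rw [hz i, zero_pow (by omega : t ≠ 0)])] at hy1
    norm_num at hy1
  obtain ⟨i0, hi0⟩ := hex
  obtain ⟨s, c, hc, hic, hjc, hchain⟩ := hconn i0 v
  set Mset : Finset (Fin (s+1)) := Finset.univ.filter (fun m => ∃ w ∈ c m, y w = 0)
    with hMdef
  have hMne : Mset.Nonempty := ⟨Fin.last s, mem_filter.2 ⟨mem_univ _, ⟨v, hjc, hyv⟩⟩⟩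
  set m : Fin (s+1) := Mset.min' hMne with hmdef
  have hm : ∃ w ∈ c m, y w = 0 := (mem_filter.1 (Mset.min'_mem hMne)).2
  have hmlt : ∀ m' : Fin (s+1), m' < m → ∀ w ∈ c m', 0 < y w := by
    intro m' hm' w hw
    by_contra hpos
    have hw0 : y w = 0 := le_antisymm (not_lt.1 hpos) (hy0 w)
    have : m' ∈ Mset := mem_filter.2 ⟨mem_univ _, ⟨w, hw, hw0⟩⟩
    exact absurd (Mset.min'_le _ this) (not_le.2 hm')
  have hKey : ∃ K' ∈ G.cliqueFinset t, ∃ u' ∈ K', 0 < y u' ∧ ∃ v' ∈ K', y v' = 0 := by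
    obtain ⟨w0, hw0c, hw0⟩ := hm
    by_cases hm0 : m = 0
    · exact ⟨c m, hc m, i0, by rw [hm0]; exact hic, hi0, w0, hw0c, hw0⟩
    · have h1 : (m : ℕ) ≠ 0 := fun h => hm0 (Fin.ext h)
      have h2 : (m : ℕ) ≤ s := Nat.lt_succ_iff.1 m.isLt
      set mp : Fin s := ⟨(m : ℕ) - 1, by omega⟩ with hmpdef
      have hcs : (mp.castSucc : Fin (s+1)) < m := by
        rw [Fin.lt_def]
        simp only [hmpdef, Fin.coe_castSucc]
        omega
      have hsucc : mp.succ = m := by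
        apply Fin.ext
        simp only [hmpdef, Fin.val_succ]
        omega
      obtain ⟨w1, hw1⟩ := hchain mp
      rw [Finset.mem_inter] at hw1
      have hw1pos : 0 < y w1 := hmlt mp.castSucc hcs w1 hw1.1
      refine ⟨c m, hc m, w1, ?_, hw1pos, w0, hw0c, hw0⟩
      rw [← hsucc]
      exact hw1.2
  obtain ⟨K', hK', u', hu', hu'pos, v', hv', hv'0⟩ := hKey
  obtain ⟨z, hz0, hz1, hzlt⟩ := perturb G t ht hy0 hy1 hK' hu' hu'pos hv' hv'0
  exact absurd (hmax z hz0 hz1) (not_le.2 hzlt)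

end Aux

set_option maxHeartbeats 1000000 in
open scoped Classical in
/-- Strict monotonicity of the `t`-clique spectral radius: if `H` is a proper
subgraph of `G` on the same vertex set, `G` is `t`-clique connected, and some
edge of `G` missing from `H` lies in a `t`-clique of `G`, then
`ρ_t(H) < ρ_t(G)`. -/
theorem cliqueSpectralRadius_strict_mono {V : Type*} [Fintype V] [DecidableEq V]
    (G H : SimpleGraph V) (t : ℕ) (ht : 2 ≤ t)
    (hle : H ≤ G) (hne : H ≠ G)
    (hconn : TCliqueConnected G t)
    (hedge : ∃ u v : V, G.Adj u v ∧ ¬ H.Adj u v ∧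
      ∃ K ∈ G.cliqueFinset t, u ∈ K ∧ v ∈ K) :
    cliqueSpectralRadius H t < cliqueSpectralRadius G t := by
  classical
  have hrw : ∀ (G' : SimpleGraph V), cliqueSpectralRadius G' t
      = sSup {r : ℝ | ∃ x : V → ℝ, (∀ i, 0 ≤ x i) ∧ (∑ i, x i ^ t) = 1 ∧
        r = (t:ℝ) * ∑ S ∈ G'.cliqueFinset t, ∏ i ∈ S, x i} := by
    intro G'
    unfold cliqueSpectralRadius
    congr!
  obtain ⟨u, v, huv, hnuv, K, hKG, huK, hvK⟩ := hedge
  obtain ⟨xH, hxHD, hxHmax⟩ := (feas_compact (V := V) t ht).exists_isMaxOn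
    (feas_nonempty (V := V) t ht u) (objective_continuous H t).continuousOn
  have hHsubG : H.cliqueFinset t ⊆ G.cliqueFinset t := by
    intro S hS
    rw [SimpleGraph.mem_cliqueFinset_iff] at *
    exact hS.mono hle
  have hρH_le : cliqueSpectralRadius H t
      ≤ (t:ℝ) * ∑ S ∈ H.cliqueFinset t, ∏ i ∈ S, xH i := by
    rw [hrw]
    refine csSup_le ⟨_, ⟨xH, hxHD.1, hxHD.2, rfl⟩⟩ ?_
    rintro r ⟨x, hx0, hx1, rfl⟩
    exact isMaxOn_iff.1 hxHmax x ⟨hx0, hx1⟩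
  have hSGbdd : BddAbove {r : ℝ | ∃ x : V → ℝ, (∀ i, 0 ≤ x i) ∧ (∑ i, x i ^ t) = 1 ∧
      r = (t:ℝ) * ∑ S ∈ G.cliqueFinset t, ∏ i ∈ S, x i} := by
    refine ⟨(t:ℝ) * ((G.cliqueFinset t).card : ℝ), ?_⟩
    rintro r ⟨x, hx0, hx1, rfl⟩
    apply mul_le_mul_of_nonneg_left _ (by positivity)
    calc ∑ S ∈ G.cliqueFinset t, ∏ i ∈ S, x i
        ≤ ∑ _S ∈ G.cliqueFinset t, (1:ℝ) := Finset.sum_le_sum fun S _ =>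
          Finset.prod_le_one (fun i _ => hx0 i) (fun i _ => feas_le_one ht hx0 hx1 i)
      _ = ((G.cliqueFinset t).card : ℝ) := by simp
  have hρG_ge : ∀ x : V → ℝ, (∀ i, 0 ≤ x i) → (∑ i, x i ^ t) = 1 →
      (t:ℝ) * ∑ S ∈ G.cliqueFinset t, ∏ i ∈ S, x i ≤ cliqueSpectralRadius G t := by
    intro x hx0 hx1
    rw [hrw]
    exact le_csSup hSGbdd ⟨x, hx0, hx1, rfl⟩
  by_contra hcon
  push_neg at hcon
  have e1 : (t:ℝ) * ∑ S ∈ H.cliqueFinset t, ∏ i ∈ S, xH i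
      ≤ (t:ℝ) * ∑ S ∈ G.cliqueFinset t, ∏ i ∈ S, xH i := by
    apply mul_le_mul_of_nonneg_left _ (by positivity)
    exact Finset.sum_le_sum_of_subset_of_nonneg hHsubG
      (fun S _ _ => Finset.prod_nonneg fun i _ => hxHD.1 i)
  have e2 : (t:ℝ) * ∑ S ∈ G.cliqueFinset t, ∏ i ∈ S, xH i ≤ cliqueSpectralRadius G t :=
    hρG_ge xH hxHD.1 hxHD.2
  have hmaxG : ∀ z : V → ℝ, (∀ i, 0 ≤ z i) → (∑ i, z i ^ t) = 1 →
      (t:ℝ) * ∑ S ∈ G.cliqueFinset t, ∏ i ∈ S, z i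
        ≤ (t:ℝ) * ∑ S ∈ G.cliqueFinset t, ∏ i ∈ S, xH i := by
    intro z hz0 hz1
    have := hρG_ge z hz0 hz1
    linarith
  have hpos : ∀ i, 0 < xH i := maximizer_pos G t ht hconn hxHD.1 hxHD.2 hmaxG
  have hKnotH : K ∉ H.cliqueFinset t := by
    intro hKH
    have hcl := (SimpleGraph.mem_cliqueFinset_iff.1 hKH).1
    exact hnuv (hcl (Finset.mem_coe.2 huK) (Finset.mem_coe.2 hvK) huv.ne)
  have hstrict : (t:ℝ) * ∑ S ∈ H.cliqueFinset t, ∏ i ∈ S, xH i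
      < (t:ℝ) * ∑ S ∈ G.cliqueFinset t, ∏ i ∈ S, xH i := by
    apply mul_lt_mul_of_pos_left _ (by positivity : (0:ℝ) < t)
    calc ∑ S ∈ H.cliqueFinset t, ∏ i ∈ S, xH i
        < ∑ S ∈ insert K (H.cliqueFinset t), ∏ i ∈ S, xH i := by
          rw [Finset.sum_insert hKnotH]
          have : 0 < ∏ i ∈ K, xH i := Finset.prod_pos fun i _ => hpos i
          linarith
      _ ≤ ∑ S ∈ G.cliqueFinset t, ∏ i ∈ S, xH i :=
          Finset.sum_le_sum_of_subset_of_nonneg (Finset.insert_subset hKG hHsubG)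
            (fun S _ _ => Finset.prod_nonneg fun i _ => hxHD.1 i)
  linarith
end
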